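/- arXiv:2408.02298 — 3 statements merged into one kernel-verified Lean document; each statement's English description precedes it below -/
import Mathlib

section
/- For any vectors e1, e2 ∈ ℝ^d, any k ∈ {1,…,d}, and any ε > 0, one has 1 − FeatAgree(e1, e2; k) ≤ ε^{−1} · ℓ_Ftr(e2; e1, k). (Lemma 1: the feature-agreement surrogate loss upper-bounds the feature disagreement.) -/
open Finset

/-- `rnk x i` is the rank (1-indexed) of `|x i|` among `|x 1|,…,|x d|` in descending
order, ties broken by index: it is the unique bijection `[d] → [d]` with
`rnk x i < rnk x j` iff `|x i| > |x j|`, or `|x i| = |x j|` and `i < j`. -/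
noncomputable def rnk {d : ℕ} (x : Fin d → ℝ) (i : Fin d) : ℕ :=
  (Finset.univ.filter (fun j => |x i| < |x j| ∨ (|x j| = |x i| ∧ j ≤ i))).card

/-- `TopFeatures(x;k)`: indices whose rank is at most `k`. -/
noncomputable def topFeat {d : ℕ} (x : Fin d → ℝ) (k : ℕ) : Finset (Fin d) :=
  Finset.univ.filter (fun i => rnk x i ≤ k)

/-- `sign(t) = 1` if `t ≥ 0`, else `-1`. -/
noncomputable def sgn (t : ℝ) : ℝ := if 0 ≤ t then 1 else -1

/-- Top-`k` feature agreement. -/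
noncomputable def featAgree {d : ℕ} (e1 e2 : Fin d → ℝ) (k : ℕ) : ℝ :=
  ((topFeat e1 k ∩ topFeat e2 k).card : ℝ) / k

/-- Top-`k` rank agreement. -/
noncomputable def rankAgree {d : ℕ} (e1 e2 : Fin d → ℝ) (k : ℕ) : ℝ :=
  (((topFeat e1 k ∩ topFeat e2 k).filter (fun i => rnk e1 i = rnk e2 i)).card : ℝ) / k

/-- Top-`k` sign agreement. -/
noncomputable def signAgree {d : ℕ} (e1 e2 : Fin d → ℝ) (k : ℕ) : ℝ :=
  (((topFeat e1 k ∩ topFeat e2 k).filter (fun i => sgn (e1 i) = sgn (e2 i))).card : ℝ) / k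

/-- Top-`k` signed-rank agreement. -/
noncomputable def signedRankAgree {d : ℕ} (e1 e2 : Fin d → ℝ) (k : ℕ) : ℝ :=
  (((topFeat e1 k ∩ topFeat e2 k).filter
      (fun i => sgn (e1 i) = sgn (e2 i) ∧ rnk e1 i = rnk e2 i)).card : ℝ) / k

/-- `ψ_feat(e2)`: max of `|e2 i|` over `i ∉ TopFeatures(e1;k)` when `k < d`, else `-ε`. -/
noncomputable def psiFeat {d : ℕ} (e1 e2 : Fin d → ℝ) (k : ℕ) (ε : ℝ) : ℝ :=
  if k < d then sSup ((fun i => |e2 i|) '' {i : Fin d | i ∉ topFeat e1 k}) else -ε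

/-- Feature-agreement surrogate loss `ℓ_Ftr(e2; e1, k)`. -/
noncomputable def lossFtr {d : ℕ} (e2 e1 : Fin d → ℝ) (k : ℕ) (ε : ℝ) : ℝ :=
  (∑ i ∈ topFeat e1 k, max 0 (psiFeat e1 e2 k ε - |e2 i| + ε)) / k

/-- `sortD a j` is the `j`-th largest entry of `a` (for `1 ≤ j ≤ d`). -/
noncomputable def sortD {d : ℕ} (a : Fin d → ℝ) (j : ℕ) : ℝ :=
  if h : d - j < d then (a ∘ Tuple.sort a) ⟨d - j, h⟩ else 0

/-- Rank-agreement surrogate loss `ℓ_Rnk(e2; e1, k)`: the sum over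
`I = {(j,i) : j ∈ [k], rank(e1,i) = j}` is realized as the sum over
`i ∈ TopFeatures(e1;k)` with `j = rnk e1 i`. -/
noncomputable def lossRnk {d : ℕ} (e2 e1 : Fin d → ℝ) (k : ℕ) (ε : ℝ) : ℝ :=
  (∑ i ∈ topFeat e1 k,
    max 0 (sortD (Function.update (fun t => |e2 t|) i (-ε)) (rnk e1 i) - |e2 i| + ε)) / k

/-- `ψ_sign(e2)`: max of `|e2 i|` over `i ∉ TopFeatures(e1;k)` when `k < d`, else `0`. -/
noncomputable def psiSign {d : ℕ} (e1 e2 : Fin d → ℝ) (k : ℕ) : ℝ :=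
  if k < d then sSup ((fun i => |e2 i|) '' {i : Fin d | i ∉ topFeat e1 k}) else 0

/-- Sign-agreement surrogate loss `ℓ_Sgn(e2; e1, k)`. -/
noncomputable def lossSgn {d : ℕ} (e2 e1 : Fin d → ℝ) (k : ℕ) (ε : ℝ) : ℝ :=
  (∑ i ∈ topFeat e1 k, max 0 (psiSign e1 e2 k - sgn (e1 i) * e2 i + ε)) / k

/-- Signed-rank-agreement surrogate loss `ℓ_SgnRnk(e2; e1, k)`. -/
noncomputable def lossSgnRnk {d : ℕ} (e2 e1 : Fin d → ℝ) (k : ℕ) (ε : ℝ) : ℝ :=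
  (∑ i ∈ topFeat e1 k,
    max 0 (sortD (Function.update (fun t => |e2 t|) i 0) (rnk e1 i) - sgn (e1 i) * e2 i + ε)) / k

/-!
The top-`k` sets `A` of `e1` and `B` of `e2` have exactly `k` elements, because `rnk x` is the
rank with respect to the injective key `i ↦ (-|x i|, i)` in lexicographic order. An index in
`A \ B` is outranked in `|e2|` by some index outside `A`, so its hinge term is at least `ε`;
summing gives `ε · #(A \ B) ≤ k · ℓ_Ftr`, and `1 - FeatAgree = #(A \ B) / k`.
-/

section RankBy

variable {ι α : Type*} [Fintype ι] [LinearOrder α] {f : ι → α}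

def rankBy (f : ι → α) (i : ι) : ℕ :=
  #{j | f j ≤ f i}

lemma rankBy_lt_rankBy {i j : ι} (h : f i < f j) : rankBy f i < rankBy f j := by
  refine card_lt_card ⟨monotone_filter_right _ fun _ _ hl => hl.trans h.le, fun hsub => ?_⟩
  exact h.not_ge (mem_filter.mp (hsub (by simp))).2

lemma rankBy_injective (hf : Function.Injective f) : Function.Injective (rankBy f) := by
  intro i j hij
  by_contra hne
  rcases (hf.ne hne).lt_or_gt with h | h
  · exact (rankBy_lt_rankBy h).ne hij
  · exact (rankBy_lt_rankBy h).ne' hij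

lemma rankBy_mem_Icc (f : ι → α) (i : ι) : rankBy f i ∈ Icc 1 (Fintype.card ι) :=
  mem_Icc.mpr ⟨card_pos.mpr ⟨i, by simp⟩, card_le_univ _⟩

lemma image_rankBy (hf : Function.Injective f) :
    univ.image (rankBy f) = Icc 1 (Fintype.card ι) := by
  refine eq_of_subset_of_card_le (fun n hn => ?_) ?_
  · obtain ⟨i, -, rfl⟩ := mem_image.mp hn
    exact rankBy_mem_Icc f i
  · rw [card_image_of_injective _ (rankBy_injective hf), Nat.card_Icc, card_univ]
    omega

lemma card_filter_rankBy_le (hf : Function.Injective f) {k : ℕ} (hk : k ≤ Fintype.card ι) :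
    #{i | rankBy f i ≤ k} = k := by
  calc #{i | rankBy f i ≤ k}
      = #((univ.image (rankBy f)).filter (· ≤ k)) := by
        rw [filter_image, card_image_of_injective _ (rankBy_injective hf)]
    _ = #(Icc 1 k) := by
        rw [image_rankBy hf]
        congr 1
        ext n
        simp only [mem_filter, mem_Icc]
        omega
    _ = k := by simp

end RankBy

section Rank

variable {d : ℕ}

def absKey (x : Fin d → ℝ) (i : Fin d) : ℝ ×ₗ Fin d :=
  toLex (-|x i|, i)

lemma absKey_injective (x : Fin d → ℝ) : Function.Injective (absKey x) :=
  fun _ _ h => congrArg Prod.snd (toLex.injective h)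

lemma rnk_eq_rankBy (x : Fin d → ℝ) : rnk x = rankBy (absKey x) := by
  ext i
  unfold rnk rankBy
  congr 1
  ext j
  simp [absKey, Prod.Lex.le_iff]

lemma card_topFeat (x : Fin d → ℝ) {k : ℕ} (hk : k ≤ d) : #(topFeat x k) = k := by
  simpa [topFeat, rnk_eq_rankBy] using
    card_filter_rankBy_le (absKey_injective x) (by simpa using hk)

end Rank

section FeatureAgreement

variable {d : ℕ}

lemma rnk_le (x : Fin d → ℝ) (i : Fin d) : rnk x i ≤ d :=
  (card_le_univ _).trans_eq (Fintype.card_fin d)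

-- More than `k` indices rank at or above `i`, so one of them escapes `A`.
lemma exists_notMem_abs_le_of_notMem_topFeat {x : Fin d → ℝ} {k : ℕ} {A : Finset (Fin d)}
    (hA : #A ≤ k) {i : Fin d} (hi : i ∉ topFeat x k) : ∃ j ∉ A, |x i| ≤ |x j| := by
  have hlt : #A < rnk x i := hA.trans_lt (by simpa [topFeat] using hi)
  obtain ⟨j, hj, hjA⟩ := exists_mem_notMem_of_card_lt_card hlt
  refine ⟨j, hjA, ?_⟩
  rcases (mem_filter.mp hj).2 with h | ⟨h, -⟩
  · exact h.le
  · exact h.ge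

lemma abs_le_psiFeat {e1 : Fin d → ℝ} (e2 : Fin d → ℝ) {k : ℕ} (ε : ℝ) {j : Fin d}
    (hj : j ∉ topFeat e1 k) : |e2 j| ≤ psiFeat e1 e2 k ε := by
  have hkd : k < d := (not_le.mp (by simpa [topFeat] using hj)).trans_le (rnk_le e1 j)
  rw [psiFeat, if_pos hkd]
  exact le_csSup (Set.toFinite _).bddAbove ⟨j, hj, rfl⟩

lemma le_lossFtr_term {e1 e2 : Fin d → ℝ} {k : ℕ} (hkd : k ≤ d) (ε : ℝ) {i : Fin d}
    (hi : i ∈ topFeat e1 k \ topFeat e2 k) : ε ≤ max 0 (psiFeat e1 e2 k ε - |e2 i| + ε) := by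
  obtain ⟨j, hj, hij⟩ :=
    exists_notMem_abs_le_of_notMem_topFeat (card_topFeat e1 hkd).le (mem_sdiff.mp hi).2
  have := abs_le_psiFeat e2 ε hj
  exact le_max_of_le_right (by linarith)

lemma one_sub_featAgree {e1 e2 : Fin d → ℝ} {k : ℕ} (hk : k ≠ 0) (hkd : k ≤ d) :
    1 - featAgree e1 e2 k = #(topFeat e1 k \ topFeat e2 k) / k := by
  have hcard : (#(topFeat e1 k ∩ topFeat e2 k) : ℝ) + #(topFeat e1 k \ topFeat e2 k) = k := by
    exact_mod_cast (card_inter_add_card_sdiff _ _).trans (card_topFeat e1 hkd)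
  have hk' : (k : ℝ) ≠ 0 := by exact_mod_cast hk
  rw [featAgree, eq_div_iff hk', sub_mul, div_mul_cancel₀ _ hk']
  linarith

end FeatureAgreement

/-- **Lemma 1.** For any `e1, e2 ∈ ℝ^d`, `k ∈ {1,…,d}`, and `ε > 0`,
`1 − FeatAgree(e1,e2;k) ≤ ε⁻¹ · ℓ_Ftr(e2; e1, k)`. -/
theorem featureDisagreement_le_surrogate {d : ℕ} (e1 e2 : Fin d → ℝ) (k : ℕ)
    (hk : 1 ≤ k) (hkd : k ≤ d) (ε : ℝ) (hε : 0 < ε) :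
    1 - featAgree e1 e2 k ≤ ε⁻¹ * lossFtr e2 e1 k ε := by
  set A := topFeat e1 k
  set loss := fun i => max 0 (psiFeat e1 e2 k ε - |e2 i| + ε)
  have hmass : ε * #(A \ topFeat e2 k) ≤ ∑ i ∈ A, loss i :=
    calc ε * #(A \ topFeat e2 k) = ∑ _i ∈ A \ topFeat e2 k, ε := by simp [mul_comm]
      _ ≤ ∑ i ∈ A \ topFeat e2 k, loss i := sum_le_sum fun i hi => le_lossFtr_term hkd ε hi
      _ ≤ ∑ i ∈ A, loss i :=
        sum_le_sum_of_subset_of_nonneg sdiff_subset fun _ _ _ => le_max_left _ _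
  rw [one_sub_featAgree (by omega) hkd, lossFtr, ← mul_div_assoc]
  exact div_le_div_of_nonneg_right ((le_inv_mul_iff₀ hε).mpr hmass) k.cast_nonneg
end

section
/- Let e1 ∈ ℝ^d, k ∈ {1,…,d}, and δ > 0 be such that: (a) for all distinct indices i, j ∈ TopFeatures(e1; max(k+1, d)) (this set equals {1,…,d} since max(k+1,d) ≥ d), one has ||e1_i| − |e1_j|| ≥ √2·δ; and (b) additionally, if k = d, then |e1_i| ≥ δ for all i ∈ {1,…,d}. Then for every e2 ∈ ℝ^d, 1 − SignedRankAgree(e1, e2; k) ≤ δ^{−1} · ‖e1 − e2‖₂, where ‖·‖₂ is the Euclidean norm on ℝ^d. (Lemma 5: the L2 distance between explanations upper-bounds the signed-rank disagreement.) -/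
open Finset

lemma rnk_le_card {d : ℕ} (x : Fin d → ℝ) (i : Fin d) : rnk x i ≤ d := by
  classical
  calc rnk x i ≤ (Finset.univ : Finset (Fin d)).card := Finset.card_filter_le _ _
  _ = d := by simp

lemma one_le_rnk {d : ℕ} (x : Fin d → ℝ) (i : Fin d) : 1 ≤ rnk x i := by
  classical
  have hi : i ∈ Finset.univ.filter
      (fun j => |x i| < |x j| ∨ (|x j| = |x i| ∧ j ≤ i)) := by simp
  exact Finset.card_pos.mpr ⟨i, hi⟩

/-- **Lemma 5.** If (a) `||e1_i| − |e1_j|| ≥ √2·δ` for all distinct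
`i, j ∈ TopFeatures(e1; max(k+1,d))` and (b) additionally `|e1_i| ≥ δ` for all `i`
whenever `k = d`, then for every `e2`,
`1 − SignedRankAgree(e1,e2;k) ≤ δ⁻¹ · ‖e1 − e2‖₂`. -/
theorem signedRankDisagreement_le_normDisagreement {d : ℕ} (e1 : Fin d → ℝ) (k : ℕ)
    (hk : 1 ≤ k) (hkd : k ≤ d) (δ : ℝ) (hδ : 0 < δ)
    (ha : ∀ i ∈ topFeat e1 (max (k + 1) d), ∀ j ∈ topFeat e1 (max (k + 1) d),
      i ≠ j → Real.sqrt 2 * δ ≤ |(|e1 i| - |e1 j|)|)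
    (hb : k = d → ∀ i : Fin d, δ ≤ |e1 i|) :
    ∀ e2 : Fin d → ℝ,
      1 - signedRankAgree e1 e2 k ≤ δ⁻¹ * Real.sqrt (∑ i, (e1 i - e2 i) ^ 2) := by
  intro e2
  classical
  set S := Real.sqrt (∑ i, (e1 i - e2 i) ^ 2) with hSdef
  have hS0 : 0 ≤ S := Real.sqrt_nonneg _
  have hkpos : (0:ℝ) < (k:ℝ) := by exact_mod_cast hk
  have hsqrt2 : (1:ℝ) ≤ Real.sqrt 2 := by
    nlinarith [Real.sq_sqrt (by norm_num : (0:ℝ) ≤ 2), Real.sqrt_nonneg 2]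
  have hmemtop : ∀ i : Fin d, i ∈ topFeat e1 (max (k+1) d) := by
    intro i
    simp only [topFeat, Finset.mem_filter, Finset.mem_univ, true_and]
    exact (rnk_le_card e1 i).trans (le_max_right _ _)
  have ha' : ∀ i j : Fin d, i ≠ j → Real.sqrt 2 * δ ≤ |(|e1 i| - |e1 j|)| :=
    fun i j hij => ha i (hmemtop i) j (hmemtop j) hij
  have hne : ∀ i j : Fin d, i ≠ j → |e1 i| ≠ |e1 j| := by
    intro i j hij heq
    have h1 := ha' i j hij
    rw [heq, sub_self, abs_zero] at h1
    nlinarith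
  rcases le_or_gt δ S with hcase | hcase
  · -- large distance: RHS ≥ 1
    have hag : 0 ≤ signedRankAgree e1 e2 k := by
      unfold signedRankAgree
      positivity
    have h1 : (1:ℝ) ≤ δ⁻¹ * S := by
      calc (1:ℝ) = δ⁻¹ * δ := (inv_mul_cancel₀ hδ.ne').symm
      _ ≤ δ⁻¹ * S := by gcongr
    linarith
  · -- small distance: full agreement
    have hdiff : ∀ i, |e1 i - e2 i| ≤ S := by
      intro i
      have h1 : (e1 i - e2 i)^2 ≤ ∑ j, (e1 j - e2 j)^2 :=
        Finset.single_le_sum (f := fun j => (e1 j - e2 j)^2)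
          (fun j _ => sq_nonneg _) (Finset.mem_univ i)
      calc |e1 i - e2 i| = Real.sqrt ((e1 i - e2 i)^2) := (Real.sqrt_sq_eq_abs _).symm
      _ ≤ S := Real.sqrt_le_sqrt h1
    have hpair : ∀ i j : Fin d, i ≠ j →
        |e1 i - e2 i| + |e1 j - e2 j| < Real.sqrt 2 * δ := by
      intro i j hij
      have hsub : ({i, j} : Finset (Fin d)) ⊆ Finset.univ := Finset.subset_univ _
      have h1 : (e1 i - e2 i)^2 + (e1 j - e2 j)^2 ≤ ∑ t, (e1 t - e2 t)^2 := by
        have h2 := Finset.sum_le_sum_of_subset_of_nonneg hsub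
          (fun t _ _ => sq_nonneg (e1 t - e2 t))
        rwa [Finset.sum_pair hij] at h2
      have key : (|e1 i - e2 i| + |e1 j - e2 j|)^2 ≤ 2 * ∑ t, (e1 t - e2 t)^2 := by
        nlinarith [sq_abs (e1 i - e2 i), sq_abs (e1 j - e2 j),
          sq_nonneg (|e1 i - e2 i| - |e1 j - e2 j|)]
      have h2 : |e1 i - e2 i| + |e1 j - e2 j| ≤ Real.sqrt 2 * S := by
        calc |e1 i - e2 i| + |e1 j - e2 j|
            = Real.sqrt ((|e1 i - e2 i| + |e1 j - e2 j|)^2) :=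
              (Real.sqrt_sq (by positivity)).symm
        _ ≤ Real.sqrt (2 * ∑ t, (e1 t - e2 t)^2) := Real.sqrt_le_sqrt key
        _ = Real.sqrt 2 * S := Real.sqrt_mul (by norm_num) _
      have h3 : Real.sqrt 2 * S < Real.sqrt 2 * δ := by
        have : (0:ℝ) < Real.sqrt 2 := by linarith
        exact mul_lt_mul_of_pos_left hcase this
      linarith
    have hd1 : ∀ t, |(|e2 t| - |e1 t|)| ≤ |e1 t - e2 t| := by
      intro t
      have h := abs_abs_sub_abs_le_abs_sub (e1 t) (e2 t)
      rwa [abs_sub_comm (|e1 t|) (|e2 t|)] at h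
    have horder : ∀ i j : Fin d, |e1 i| < |e1 j| → |e2 i| < |e2 j| := by
      intro i j hlt
      have hij : i ≠ j := by rintro rfl; exact lt_irrefl _ hlt
      have hgap : Real.sqrt 2 * δ ≤ |e1 j| - |e1 i| := by
        have h1 := ha' j i hij.symm
        rwa [abs_of_pos (by linarith)] at h1
      have hp := hpair i j hij
      have b1 := abs_le.mp (hd1 i)
      have b2 := abs_le.mp (hd1 j)
      linarith [b1.1, b1.2, b2.1, b2.2]
    have hrnk : ∀ i, rnk e2 i = rnk e1 i := by
      intro i
      unfold rnk
      congr 1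
      apply Finset.filter_congr
      intro j _
      by_cases hij : j = i
      · subst hij; simp
      · have hne1 : |e1 j| ≠ |e1 i| := hne j i hij
        have trans2 : |e2 i| < |e2 j| ↔ |e1 i| < |e1 j| := by
          constructor
          · intro h
            rcases lt_trichotomy (|e1 i|) (|e1 j|) with h1 | h1 | h1
            · exact h1
            · exact absurd h1.symm hne1
            · exact absurd (horder j i h1) (lt_asymm h)
          · exact horder i j
        have hne2 : |e2 j| ≠ |e2 i| := by
          rcases lt_or_gt_of_ne hne1 with h1 | h1
          · exact ne_of_lt (horder j i h1)
          · exact ne_of_gt (horder i j h1)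
        constructor
        · rintro (h | ⟨h, -⟩)
          · exact Or.inl (trans2.mp h)
          · exact absurd h hne2
        · rintro (h | ⟨h, -⟩)
          · exact Or.inl (trans2.mpr h)
          · exact absurd h hne1
    have hδle : ∀ i : Fin d, rnk e1 i ≤ k → δ ≤ |e1 i| := by
      intro i hi
      rcases eq_or_lt_of_le hkd with heq | hlt
      · exact hb heq i
      · have hcard : ¬ ((Finset.univ : Finset (Fin d)) ⊆
            Finset.univ.filter (fun j => |e1 i| < |e1 j| ∨ (|e1 j| = |e1 i| ∧ j ≤ i))) := by
          intro hsub
          have h2 := Finset.card_le_card hsub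
          have h3 : rnk e1 i ≤ k := hi
          unfold rnk at h3
          simp only [Finset.card_univ, Fintype.card_fin] at h2
          omega
        obtain ⟨j, -, hj⟩ := Finset.not_subset.mp hcard
        simp only [Finset.mem_filter, Finset.mem_univ, true_and, not_or, not_and, not_lt] at hj
        have hji : j ≠ i := by
          rintro rfl
          exact absurd rfl (fun h => by simpa using hj.2 h)
        have hle : |e1 j| ≤ |e1 i| := hj.1
        have h4 := ha' i j (Ne.symm hji)
        rw [abs_of_nonneg (by linarith)] at h4
        nlinarith [abs_nonneg (e1 j)]
    have hsign : ∀ i : Fin d, rnk e1 i ≤ k → sgn (e1 i) = sgn (e2 i) := by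
      intro i hi
      have h1 := hδle i hi
      have h2 : |e1 i - e2 i| < δ := lt_of_le_of_lt (hdiff i) hcase
      unfold sgn
      rcases le_or_gt 0 (e1 i) with h4 | h4
      · have h5 : 0 ≤ e2 i := by
          rw [abs_of_nonneg h4] at h1
          linarith [le_abs_self (e1 i - e2 i)]
        rw [if_pos h4, if_pos h5]
      · have h5 : e2 i < 0 := by
          rw [abs_of_neg h4] at h1
          linarith [neg_abs_le (e1 i - e2 i)]
        rw [if_neg (not_le.mpr h4), if_neg (not_le.mpr h5)]
    have hmono : ∀ i j : Fin d, |e1 j| < |e1 i| → rnk e1 i < rnk e1 j := by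
      intro i j hlt
      have hij : i ≠ j := by rintro rfl; exact lt_irrefl _ hlt
      unfold rnk
      have hsub : Finset.univ.filter (fun t => |e1 i| < |e1 t| ∨ (|e1 t| = |e1 i| ∧ t ≤ i)) ⊆
          Finset.univ.filter (fun t => |e1 j| < |e1 t| ∨ (|e1 t| = |e1 j| ∧ t ≤ j)) := by
        intro t ht
        simp only [Finset.mem_filter, Finset.mem_univ, true_and] at ht ⊢
        have htge : |e1 i| ≤ |e1 t| := by
          rcases ht with h | ⟨h, -⟩
          · exact h.le
          · exact h.ge
        exact Or.inl (lt_of_lt_of_le hlt htge)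
      have hjmem : j ∈ Finset.univ.filter
          (fun t => |e1 j| < |e1 t| ∨ (|e1 t| = |e1 j| ∧ t ≤ j)) := by simp
      have hjnot : j ∉ Finset.univ.filter
          (fun t => |e1 i| < |e1 t| ∨ (|e1 t| = |e1 i| ∧ t ≤ i)) := by
        simp only [Finset.mem_filter, Finset.mem_univ, true_and, not_or, not_and, not_lt]
        exact ⟨hlt.le, fun h => absurd h (ne_of_lt hlt)⟩
      exact Finset.card_lt_card ((Finset.ssubset_iff_of_subset hsub).mpr ⟨j, hjmem, hjnot⟩)
    have hinj : Function.Injective (rnk e1) := by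
      intro i j h
      by_contra hij
      rcases lt_or_gt_of_ne (hne i j hij) with h1 | h1
      · exact absurd h (hmono j i h1).ne'
      · exact absurd h (hmono i j h1).ne
    have himage : Finset.univ.image (rnk e1) = Finset.Icc 1 d := by
      apply Finset.eq_of_subset_of_card_le
      · intro n hn
        simp only [Finset.mem_image] at hn
        obtain ⟨i, -, rfl⟩ := hn
        exact Finset.mem_Icc.mpr ⟨one_le_rnk e1 i, rnk_le_card e1 i⟩
      · rw [Finset.card_image_of_injective _ hinj]
        simp [Nat.card_Icc]
    have hcardtop : (topFeat e1 k).card = k := by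
      have h1 : (Finset.univ.image (rnk e1)).filter (fun n => n ≤ k)
          = (Finset.univ.filter fun a => rnk e1 a ≤ k).image (rnk e1) :=
        Finset.filter_image
      rw [himage] at h1
      have h2 : (Finset.Icc 1 d).filter (fun n => n ≤ k) = Finset.Icc 1 k := by
        ext n
        simp only [Finset.mem_filter, Finset.mem_Icc]
        omega
      rw [h2] at h1
      have h3 : (topFeat e1 k).image (rnk e1) = Finset.Icc 1 k := by
        rw [topFeat, ← h1]
      have h4 := Finset.card_image_of_injective (topFeat e1 k) hinj
      rw [h3] at h4
      simp [Nat.card_Icc] at h4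
      omega
    have htop2 : topFeat e2 k = topFeat e1 k := by
      ext i
      simp only [topFeat, Finset.mem_filter, Finset.mem_univ, true_and, hrnk i]
    have hA : ((topFeat e1 k ∩ topFeat e2 k).filter
        (fun i => sgn (e1 i) = sgn (e2 i) ∧ rnk e1 i = rnk e2 i)) = topFeat e1 k := by
      rw [htop2, Finset.inter_self]
      apply Finset.filter_true_of_mem
      intro i hi
      have hik : rnk e1 i ≤ k := by
        simpa [topFeat] using hi
      exact ⟨hsign i hik, (hrnk i).symm⟩
    have hone : signedRankAgree e1 e2 k = 1 := by
      unfold signedRankAgree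
      rw [hA, hcardtop]
      field_simp
    rw [hone]
    have : 0 ≤ δ⁻¹ * S := by positivity
    linarith
end

section
/- Let e2 ∈ ℝ^d, ε > 0, and let i ∈ {1,…,d} and j ∈ {1,…,d} be such that rank(e2, i) > j. Then the j-th largest entry of the vector obtained from the entrywise absolute value |e2| by replacing its i-th entry with −ε satisfies sort(|e2|_{i=−ε})_j ≥ |e2_i|; consequently the corresponding hinge term satisfies max(0, sort(|e2|_{i=−ε})_j − |e2_i| + ε) ≥ ε. -/
open Finset

lemma sortD_ge_of_card {d : ℕ} (a : Fin d → ℝ) (c : ℝ) (j : ℕ) (hj1 : 1 ≤ j)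
    (hjd : j ≤ d) (S : Finset (Fin d)) (hS : j ≤ S.card) (hSc : ∀ t ∈ S, c ≤ a t) :
    c ≤ sortD a j := by
  have hd : d - j < d := by omega
  rw [sortD, dif_pos hd]
  by_contra hlt
  push_neg at hlt
  have hmono := Tuple.monotone_sort a
  have hsub : S ⊆ Finset.univ.filter (fun t => c ≤ a t) := by
    intro t ht; simp [hSc t ht]
  have h1 : S.card ≤ (Finset.univ.filter (fun p : Fin d => c ≤ a (Tuple.sort a p))).card := by
    refine le_trans (Finset.card_le_card hsub) ?_
    apply Finset.card_le_card_of_injOn (fun t => (Tuple.sort a).symm t)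
    · intro t ht; simp only [Finset.mem_filter, Finset.mem_univ, true_and] at ht ⊢
      simpa using ht
    · intro x _ y _ h; exact (Tuple.sort a).symm.injective h
  have h2 : (Finset.univ.filter (fun p : Fin d => c ≤ a (Tuple.sort a p))) ⊆
      Finset.Ioi (⟨d - j, hd⟩ : Fin d) := by
    intro p hp
    simp only [Finset.mem_filter, Finset.mem_univ, true_and] at hp
    rw [Finset.mem_Ioi]
    by_contra hle
    push_neg at hle
    have := hmono hle
    simp only [Function.comp] at this hlt
    linarith
  have h3 : (Finset.Ioi (⟨d - j, hd⟩ : Fin d)).card = j - 1 := by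
    rw [Fin.card_Ioi]; simp only [Fin.val_mk]; omega
  have := le_trans hS (le_trans h1 (Finset.card_le_card h2))
  omega

/-- If `rank(e2,i) > j` (with `1 ≤ j ≤ d`), then the `j`-th largest entry of
`|e2|` with its `i`-th entry replaced by `−ε` is at least `|e2_i|`; consequently the
corresponding hinge term is at least `ε`. -/
theorem sortD_update_ge {d : ℕ} (e2 : Fin d → ℝ) (ε : ℝ) (hε : 0 < ε)
    (i : Fin d) (j : ℕ) (hj1 : 1 ≤ j) (hjd : j ≤ d) (hij : j < rnk e2 i) :
    |e2 i| ≤ sortD (Function.update (fun t => |e2 t|) i (-ε)) j ∧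
      ε ≤ max 0 (sortD (Function.update (fun t => |e2 t|) i (-ε)) j - |e2 i| + ε) := by
  have hmem : i ∈ Finset.univ.filter
      (fun t => |e2 i| < |e2 t| ∨ (|e2 t| = |e2 i| ∧ t ≤ i)) := by
    simp
  set S := (Finset.univ.filter
      (fun t => |e2 i| < |e2 t| ∨ (|e2 t| = |e2 i| ∧ t ≤ i))).erase i with hS
  have hcard : j ≤ S.card := by
    rw [hS, Finset.card_erase_of_mem hmem]
    have : rnk e2 i = (Finset.univ.filter
      (fun t => |e2 i| < |e2 t| ∨ (|e2 t| = |e2 i| ∧ t ≤ i))).card := rfl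
    omega
  have hge : |e2 i| ≤ sortD (Function.update (fun t => |e2 t|) i (-ε)) j := by
    refine sortD_ge_of_card _ _ j hj1 hjd S hcard ?_
    intro t ht
    rw [hS] at ht
    have hne : t ≠ i := Finset.ne_of_mem_erase ht
    have ht' := Finset.mem_of_mem_erase ht
    simp only [Finset.mem_filter, Finset.mem_univ, true_and] at ht'
    rw [Function.update_of_ne hne]
    rcases ht' with h | ⟨h, _⟩
    · linarith
    · linarith [h.ge]
  refine ⟨hge, ?_⟩
  have : ε ≤ sortD (Function.update (fun t => |e2 t|) i (-ε)) j - |e2 i| + ε := by linarith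
  exact le_trans this (le_max_right _ _)
end
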